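/- For all s, s', s'' ∈ {1,…,r}, the product V_{s,X}^aux · V_{s',Y}^aux · V_{s'',Z}^aux equals the identity operator on the q auxiliary qubits if and only if s = s' = s''. -/
import Mathlib


/-!
STATEMENT 19: `V_{s,X}^aux · V_{s',Y}^aux · V_{s'',Z}^aux = I` iff `s = s' = s''`.
-/

open scoped BigOperators Matrix

noncomputable section

namespace Stmt19

/-- Pauli X. -/
def PX : Matrix (Fin 2) (Fin 2) ℂ := !![0, 1; 1, 0]

/-- The tensor product `⊗_i A i` of one single-qubit operator per qubit.
The `q = 2m` auxiliary qubits are indexed by `Fin m × Fin 2` (pair `i` consists of the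
auxiliary qubits `2i−1` and `2i`). -/
def tensorOn {m : ℕ} (A : (Fin m × Fin 2) → Matrix (Fin 2) (Fin 2) ℂ) :
    Matrix ((Fin m × Fin 2) → Fin 2) ((Fin m × Fin 2) → Fin 2) ℂ :=
  fun f g => ∏ p, A p (f p) (g p)

/-- `V_{s,X}^aux = ∏_{i∈M_s} τ_{2i}^X` with `τ_{2i}^X = X_{2i−1}`:
Pauli-X on the first qubit of each pair `i ∈ M_s`. -/
def VauxX (m r : ℕ) (Msets : Fin r → Finset (Fin m)) (s : Fin r) :
    Matrix ((Fin m × Fin 2) → Fin 2) ((Fin m × Fin 2) → Fin 2) ℂ :=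
  tensorOn (fun p => if p.1 ∈ Msets s ∧ p.2 = 0 then PX else 1)

/-- `V_{s,Y}^aux = ∏_{i∈M_s} τ_{2i}^Y` with `τ_{2i}^Y = X_{2i}`:
Pauli-X on the second qubit of each pair `i ∈ M_s`. -/
def VauxY (m r : ℕ) (Msets : Fin r → Finset (Fin m)) (s : Fin r) :
    Matrix ((Fin m × Fin 2) → Fin 2) ((Fin m × Fin 2) → Fin 2) ℂ :=
  tensorOn (fun p => if p.1 ∈ Msets s ∧ p.2 = 1 then PX else 1)

/-- `V_{s,Z}^aux = ∏_{i∈M_s} τ_{2i}^Z` with `τ_{2i}^Z = X_{2i−1} X_{2i}`: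
Pauli-X on both qubits of each pair `i ∈ M_s`. -/
def VauxZ (m r : ℕ) (Msets : Fin r → Finset (Fin m)) (s : Fin r) :
    Matrix ((Fin m × Fin 2) → Fin 2) ((Fin m × Fin 2) → Fin 2) ℂ :=
  tensorOn (fun p => if p.1 ∈ Msets s then PX else 1)

/-- Bit-flip permutation matrix: flips the bits where `a` is 1. -/
def Fl {ι : Type*} [Fintype ι] [DecidableEq ι] (a : ι → Fin 2) :
    Matrix (ι → Fin 2) (ι → Fin 2) ℂ :=
  Matrix.of fun f g => if g = f + a then 1 else 0

lemma PX_apply_self (x : Fin 2) : PX x x = 0 := by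
  fin_cases x <;> simp [PX]

lemma PX_apply_succ (x : Fin 2) : PX x (x + 1) = 1 := by
  fin_cases x <;> simp [PX] <;> rfl

lemma fin2_ne_iff (x y : Fin 2) : y ≠ x ↔ y = x + 1 := by
  revert x y; decide

lemma tensorOn_eq_Fl {m : ℕ} (c : (Fin m × Fin 2) → Prop) [DecidablePred c] :
    tensorOn (fun p => if c p then PX else 1) =
      Fl (fun p => if c p then 1 else 0) := by
  funext f g
  show (∏ p, (if c p then PX else 1) (f p) (g p)) = _
  by_cases h : g = f + fun p => if c p then 1 else 0
  · rw [show (Fl (fun p => if c p then 1 else 0) f g) = 1 from if_pos h]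
    apply Finset.prod_eq_one
    intro p _
    have hp : g p = f p + if c p then 1 else 0 := congrFun h p
    by_cases hc : c p
    · simp only [hc, if_true] at hp ⊢
      rw [hp, PX_apply_succ]
    · simp only [hc, if_false] at hp ⊢
      rw [hp, add_zero, Matrix.one_apply_eq]
  · rw [show (Fl (fun p => if c p then 1 else 0) f g) = 0 from if_neg h]
    have : ∃ p, g p ≠ f p + if c p then 1 else 0 := by
      by_contra hall
      push_neg at hall
      exact h (funext hall)
    obtain ⟨p, hp⟩ := this
    apply Finset.prod_eq_zero (Finset.mem_univ p)
    by_cases hc : c p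
    · simp only [hc, if_true] at hp ⊢
      have : g p = f p := by
        by_contra h'
        exact hp ((fin2_ne_iff _ _).mp h')
      rw [this, PX_apply_self]
    · simp only [hc, if_false] at hp ⊢
      rw [add_zero] at hp
      exact Matrix.one_apply_ne (Ne.symm hp)

lemma Fl_mul {ι : Type*} [Fintype ι] [DecidableEq ι] (a b : ι → Fin 2) :
    Fl a * Fl b = Fl (a + b) := by
  funext f g
  rw [Matrix.mul_apply]
  simp only [Fl, Matrix.of_apply]
  rw [Finset.sum_eq_single (f + a)]
  · simp [add_assoc]
  · intro h _ hne
    simp only [if_neg hne, zero_mul]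
  · intro h
    exact absurd (Finset.mem_univ _) h

lemma Fl_eq_one_iff {ι : Type*} [Fintype ι] [DecidableEq ι] (a : ι → Fin 2) :
    Fl a = 1 ↔ a = 0 := by
  constructor
  · intro h
    have h0 := congrFun (congrFun h 0) a
    by_contra ha
    rw [show Fl a 0 a = 1 from if_pos (zero_add a).symm,
      Matrix.one_apply_ne (fun h' => ha h'.symm)] at h0
    exact one_ne_zero h0
  · rintro rfl
    funext f g
    simp [Fl, Matrix.one_apply, eq_comm]

theorem triple_product_eq_one_iff (m r : ℕ) (hm : 1 ≤ m)
    (Msets : Fin r → Finset (Fin m))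
    (hMdistinct : Function.Injective Msets)
    (hModd : ∀ s, Odd (Msets s).card)
    (s s' s'' : Fin r) :
    VauxX m r Msets s * VauxY m r Msets s' * VauxZ m r Msets s'' = 1 ↔
      s = s' ∧ s' = s'' := by
  have hX : VauxX m r Msets s =
      Fl (fun p => if p.1 ∈ Msets s ∧ p.2 = 0 then 1 else 0) :=
    tensorOn_eq_Fl _
  have hY : VauxY m r Msets s' =
      Fl (fun p => if p.1 ∈ Msets s' ∧ p.2 = 1 then 1 else 0) :=
    tensorOn_eq_Fl _
  have hZ : VauxZ m r Msets s'' =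
      Fl (fun p => if p.1 ∈ Msets s'' then 1 else 0) :=
    tensorOn_eq_Fl _
  rw [hX, hY, hZ, Fl_mul, Fl_mul, Fl_eq_one_iff]
  constructor
  · intro h
    have key : ∀ (i : Fin m) (j : Fin 2),
        ((if i ∈ Msets s ∧ j = 0 then (1 : Fin 2) else 0) +
          (if i ∈ Msets s' ∧ j = 1 then 1 else 0)) +
          (if i ∈ Msets s'' then 1 else 0) = 0 := by
      intro i j
      exact congrFun h (i, j)
    have h1 : Msets s = Msets s'' := by
      ext i
      have := key i 0
      by_cases hi : i ∈ Msets s <;> by_cases hi'' : i ∈ Msets s'' <;>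
        simp [hi, hi''] at this ⊢
    have h2 : Msets s' = Msets s'' := by
      ext i
      have := key i 1
      by_cases hi : i ∈ Msets s' <;> by_cases hi'' : i ∈ Msets s'' <;>
        simp [hi, hi''] at this ⊢
    exact ⟨hMdistinct (h1.trans h2.symm), hMdistinct h2⟩
  · rintro ⟨rfl, rfl⟩
    funext p
    obtain ⟨i, j⟩ := p
    by_cases hi : i ∈ Msets s <;> fin_cases j <;> simp [hi] <;> rfl

end Stmt19
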